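/- Let p > 1, b = 1, d ∈ ℝ, and let f : ℝ → ℝ be continuous with primitive 𝓕(w) = ∫₀^w f(s) ds. If w is a solution of equation (3.4) (with b = 1) on an interval I, then the Painlevé function τ ↦ (1/p)(w(τ)² + w'(τ)²)^{p/2−1}((p−1)w'(τ)² − w(τ)²) − d|w(τ)|^p/p + 𝓕(w(τ)) is constant on I. -/

import Mathlib

open Real Set Filter Topology MeasureTheory

noncomputable section

/-- A solution of equation (3.4) on a set `I`, with derivative `w'`:
`(d/dτ)[(w² + w'²)^{(p−2)/2} w'] − b (w² + w'²)^{(p−2)/2} w + f(w) − d|w|^{p−2}w = 0`. -/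
def SolOn (p b d : ℝ) (f w w' : ℝ → ℝ) (I : Set ℝ) : Prop :=
  ContinuousOn w' I ∧
  (∀ τ ∈ I, HasDerivWithinAt w (w' τ) I τ) ∧
  ∃ F' : ℝ → ℝ,
    (∀ τ ∈ I, HasDerivWithinAt
      (fun s => (w s ^ 2 + w' s ^ 2) ^ ((p - 2) / 2) * w' s) (F' τ) I τ) ∧
    (∀ τ ∈ I, F' τ - b * (w τ ^ 2 + w' τ ^ 2) ^ ((p - 2) / 2) * w τ + f (w τ)
      - d * |w τ| ^ (p - 2) * w τ = 0)

/-- Conditions (3.2) on the nonlinearity `f`. -/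
def Cond32 (p q : ℝ) (f : ℝ → ℝ) : Prop :=
  Continuous f ∧ ContDiffOn ℝ 1 f {(0:ℝ)}ᶜ ∧ (∀ s, f (-s) = -f s) ∧
  Tendsto (fun s => f s / s ^ q) (𝓝[>] (0:ℝ)) (𝓝 1) ∧
  Tendsto (fun s => f s / s ^ (p - 1)) atTop atTop ∧
  StrictMonoOn (fun s => f s / s ^ (p - 1)) (Ioi 0)

/-- The function `E(ξ) = ((p−1)ξ² − b)(1+ξ²)^{p/2−1}`. -/
def Efun (p b : ℝ) (ξ : ℝ) : ℝ := ((p - 1) * ξ ^ 2 - b) * (1 + ξ ^ 2) ^ (p / 2 - 1)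

/-- A function taking both positive and negative values. -/
def SignChanging (ω : ℝ → ℝ) : Prop := (∃ σ, 0 < ω σ) ∧ (∃ σ, ω σ < 0)

/-- `T` is the least period of `ω`. -/
def IsLeastPeriod (ω : ℝ → ℝ) (T : ℝ) : Prop :=
  0 < T ∧ Function.Periodic ω T ∧ ∀ T', 0 < T' → Function.Periodic ω T' → T ≤ T'

/-!
With `H(a, k) = (a² + k²)^{p/2} / p` one has `∂ₖH = (a² + k²)^{p/2-1} k`, and the Painlevé function
is `k ∂ₖH - H - d|a|^p/p + 𝓕(a)` at `(a, k) = (w, w')`. Formally its derivative is `w'` times the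
left-hand side of the equation, hence zero. The catch is that only `∂ₖH(w, w')`, not `w'`, is
known to be differentiable. Convexity of `H` in `k` squeezes the energy `k ∂ₖH - H` between two
barriers built from tangent lines, at `w'(τ₀)` and at `w'(τ)`, and both barriers have the expected
derivative at `τ₀`; for the second one this uses strict differentiability of `H`.
-/

open Asymptotics

theorem ConvexOn.add_mul_sub_le_of_hasDerivAt {f : ℝ → ℝ} {f' x : ℝ}
    (hfc : ConvexOn ℝ univ f) (hf : HasDerivAt f f' x) (y : ℝ) :
    f x + f' * (y - x) ≤ f y := by
  rcases lt_trichotomy x y with hxy | rfl | hyx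
  · have := hfc.le_slope_of_hasDerivAt (mem_univ x) (mem_univ y) hxy hf
    rw [slope_def_field, le_div_iff₀ (sub_pos.2 hxy)] at this
    linarith
  · simp
  · have := hfc.slope_le_of_hasDerivAt (mem_univ y) (mem_univ x) hyx hf
    rw [slope_def_field, div_le_iff₀ (sub_pos.2 hyx)] at this
    linarith

theorem ConvexOn.comp_prodMk_left {𝕜 E F β : Type*} [Semiring 𝕜] [PartialOrder 𝕜]
    [AddCommMonoid E] [AddCommMonoid F] [AddCommMonoid β] [PartialOrder β]
    [Module 𝕜 E] [Module 𝕜 F] [SMul 𝕜 β] {f : E × F → β} (hf : ConvexOn 𝕜 univ f) (x : E) :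
    ConvexOn 𝕜 univ fun y => f (x, y) := by
  refine ⟨convex_univ, fun y₁ _ y₂ _ a b ha hb hab => ?_⟩
  have := hf.2 (mem_univ (x, y₁)) (mem_univ (x, y₂)) ha hb hab
  rwa [Prod.smul_mk, Prod.smul_mk, Prod.mk_add_mk, ← add_smul, hab, one_smul] at this

theorem convexOn_norm_rpow {E : Type*} [SeminormedAddCommGroup E] [NormedSpace ℝ E] {p : ℝ}
    (hp : 1 ≤ p) : ConvexOn ℝ univ fun x : E => ‖x‖ ^ p := by
  refine ⟨convex_univ, fun x _ y _ a b ha hb hab => ?_⟩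
  calc ‖a • x + b • y‖ ^ p ≤ (a • ‖x‖ + b • ‖y‖) ^ p := by
        refine Real.rpow_le_rpow (norm_nonneg _) ((norm_add_le _ _).trans ?_) (by linarith)
        simp [norm_smul, abs_of_nonneg ha, abs_of_nonneg hb]
    _ ≤ a • ‖x‖ ^ p + b • ‖y‖ ^ p :=
        (convexOn_rpow hp).2 (norm_nonneg x) (norm_nonneg y) ha hb hab

theorem ContinuousWithinAt.hasDerivWithinAt_mul_of_eq_zero {g f : ℝ → ℝ} {f' x : ℝ}
    {s : Set ℝ} (hg : ContinuousWithinAt g s x) (hf : HasDerivWithinAt f f' s x) (hf0 : f x = 0) :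
    HasDerivWithinAt (fun y => g y * f y) (g x * f') s x := by
  rw [hasDerivWithinAt_iff_isLittleO] at hf ⊢
  simp only [hf0, mul_zero, sub_zero, smul_eq_mul] at hf ⊢
  have hmain : (fun y => g y * (f y - (y - x) * f')) =o[𝓝[s] x] fun y => y - x := by
    simpa using (hg.tendsto.isBigO_one ℝ).mul_isLittleO hf
  have hrest : (fun y => (g y - g x) * (f' * (y - x))) =o[𝓝[s] x] fun y => y - x := by
    have hsmall : (fun y => g y - g x) =o[𝓝[s] x] fun _ => (1 : ℝ) :=
      (isLittleO_one_iff ℝ).2 (tendsto_sub_nhds_zero_iff.2 hg)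
    simpa using hsmall.mul_isBigO ((isBigO_refl (fun y => y - x) _).const_mul_left f')
  exact (hmain.add hrest).congr_left fun y => by ring

theorem HasDerivWithinAt.of_le_of_le {lo g up : ℝ → ℝ} {L x : ℝ} {s : Set ℝ}
    (hlo : HasDerivWithinAt lo L s x) (hup : HasDerivWithinAt up L s x)
    (hlo_le : ∀ᶠ y in 𝓝[s] x, lo y ≤ g y) (hle_up : ∀ᶠ y in 𝓝[s] x, g y ≤ up y)
    (hlo_eq : lo x = g x) (hup_eq : up x = g x) : HasDerivWithinAt g L s x := by
  rw [hasDerivWithinAt_iff_isLittleO] at hlo hup ⊢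
  refine (IsBigO.of_bound 1 ?_).trans_isLittleO (hlo.abs_left.add hup.abs_left)
  filter_upwards [hlo_le, hle_up] with y h1 h2
  simp only [Real.norm_eq_abs, one_mul, smul_eq_mul]
  calc |g y - g x - (y - x) * L|
      ≤ max |lo y - lo x - (y - x) * L| |up y - up x - (y - x) * L| :=
        abs_le_max_abs_abs (by linarith) (by linarith)
    _ ≤ _ := (max_le_add_of_nonneg (abs_nonneg _) (abs_nonneg _)).trans (le_abs_self _)

theorem HasStrictFDerivAt.hasDerivWithinAt_comp_sub_comp {E F : Type*}
    [NormedAddCommGroup E] [NormedSpace ℝ E] [NormedAddCommGroup F] [NormedSpace ℝ F]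
    {H : E → F} {D : E →L[ℝ] F} {u v : ℝ → E} {δ' : E} {s : Set ℝ} {x : ℝ}
    (hH : HasStrictFDerivAt H D (u x)) (hu : ContinuousWithinAt u s x)
    (hv : ContinuousWithinAt v s x) (huv : v x = u x)
    (hδ : HasDerivWithinAt (fun y => u y - v y) δ' s x) :
    HasDerivWithinAt (fun y => H (u y) - H (v y)) (D δ') s x := by
  have hlim : Tendsto (fun y => (u y, v y)) (𝓝[s] x) (𝓝 (u x, u x)) :=
    hu.tendsto.prodMk_nhds (huv ▸ hv.tendsto)
  have hlin : (fun y => H (u y) - H (v y) - D (u y - v y)) =o[𝓝[s] x] fun y => u y - v y :=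
    hH.isLittleO.comp_tendsto hlim
  have hδO : (fun y => u y - v y) =O[𝓝[s] x] fun y => y - x := by
    simpa [huv] using hδ.hasFDerivWithinAt.isBigO_sub
  have hD := D.hasFDerivAt.comp_hasDerivWithinAt x hδ
  rw [hasDerivWithinAt_iff_isLittleO] at hD ⊢
  refine ((hlin.trans_isBigO hδO).add hD).congr_left fun y => ?_
  simp [huv]

def legendreEnergy (H : ℝ × ℝ → ℝ) (x : ℝ × ℝ) : ℝ := x.2 * fderiv ℝ H x (0, 1) - H x

theorem hasDerivWithinAt_legendreEnergy {H : ℝ × ℝ → ℝ} (hH : ContDiff ℝ 1 H)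
    (hconv : ∀ a, ConvexOn ℝ univ fun ξ => H (a, ξ)) {a k : ℝ → ℝ} {a' Φ' x : ℝ} {s : Set ℝ}
    (ha : HasDerivWithinAt a a' s x) (hk : ContinuousWithinAt k s x)
    (hΦ : HasDerivWithinAt (fun y => fderiv ℝ H (a y, k y) (0, 1)) Φ' s x) :
    HasDerivWithinAt (fun y => legendreEnergy H (a y, k y))
      (k x * Φ' - fderiv ℝ H (a x, k x) (1, 0) * a') s x := by
  set φ := fun y => fderiv ℝ H (a y, k y) (0, 1)
  have hdiff := hH.differentiable one_ne_zero
  have hD : fderiv ℝ H (a x, k x) (a', 0) = fderiv ℝ H (a x, k x) (1, 0) * a' := by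
    rw [show ((a', 0) : ℝ × ℝ) = a' • (1, 0) by simp, map_smul, smul_eq_mul, mul_comm]
  have tangent (q : ℝ × ℝ) (ξ : ℝ) : H q + fderiv ℝ H q (0, 1) * (ξ - q.2) ≤ H (q.1, ξ) := by
    have hslice : HasDerivAt (fun ξ => H (q.1, ξ)) (fderiv ℝ H q (0, 1)) q.2 :=
      (hdiff q).hasFDerivAt.comp_hasDerivAt q.2 ((hasDerivAt_const _ _).prodMk (hasDerivAt_id _))
    exact (hconv q.1).add_mul_sub_le_of_hasDerivAt hslice ξ
  have hlo : HasDerivWithinAt (fun y => k x * φ y - H (a y, k x))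
      (k x * Φ' - fderiv ℝ H (a x, k x) (1, 0) * a') s x := by
    have hHa : HasDerivWithinAt (fun y => H (a y, k x)) (fderiv ℝ H (a x, k x) (a', 0)) s x :=
      (hdiff _).hasFDerivAt.comp_hasDerivWithinAt x (ha.prodMk (hasDerivWithinAt_const _ _ _))
    rw [← hD]
    exact (hΦ.const_mul (k x)).sub hHa
  have hup : HasDerivWithinAt (fun y => legendreEnergy H (a x, k x) + k y * (φ y - φ x)
      - (H (a y, k y) - H (a x, k y))) (k x * Φ' - fderiv ℝ H (a x, k x) (1, 0) * a') s x := by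
    have hmul := hk.hasDerivWithinAt_mul_of_eq_zero (hΦ.sub_const (φ x)) (sub_self _)
    have hδ : HasDerivWithinAt (fun y => (a y, k y) - (a x, k y)) ((a', 0) : ℝ × ℝ) s x := by
      simpa using (ha.sub_const (a x)).prodMk (hasDerivWithinAt_const x s (0 : ℝ))
    have hsep := (hH.contDiffAt.hasStrictFDerivAt one_ne_zero).hasDerivWithinAt_comp_sub_comp
      (ha.continuousWithinAt.prodMk hk) (continuousWithinAt_const.prodMk hk) rfl hδ
    rw [← hD]
    exact (hmul.const_add _).sub hsep
  refine hlo.of_le_of_le hup (Eventually.of_forall fun y => ?_)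
    (Eventually.of_forall fun y => ?_) ?_ ?_
  · have := tangent (a y, k y) (k x)
    simp only [legendreEnergy, φ] at this ⊢
    linarith
  · have := tangent (a x, k x) (k y)
    simp only [legendreEnergy, φ] at this ⊢
    linarith
  · simp [legendreEnergy, φ]
  · simp [legendreEnergy]

def normPowDiv (p : ℝ) (x : ℝ × ℝ) : ℝ := (x.1 ^ 2 + x.2 ^ 2) ^ (p / 2) / p

theorem norm_equivRealProdCLM_symm_rpow (x : ℝ × ℝ) (r : ℝ) :
    ‖Complex.equivRealProdCLM.symm x‖ ^ r = (x.1 ^ 2 + x.2 ^ 2) ^ (r / 2) := by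
  rw [Complex.norm_def, Complex.equivRealProdCLM_symm_apply, Complex.normSq_add_mul_I,
    Real.sqrt_eq_rpow, ← Real.rpow_mul (by positivity)]
  ring_nf

-- `ℂ` serves as the Euclidean plane, where Mathlib knows the derivative of `‖x‖ ^ p`.
theorem normPowDiv_eq_inv_mul_norm_rpow (p : ℝ) :
    normPowDiv p = fun x => p⁻¹ * ‖Complex.equivRealProdCLM.symm x‖ ^ p := by
  ext x
  rw [norm_equivRealProdCLM_symm_rpow, normPowDiv, div_eq_inv_mul]

theorem contDiff_normPowDiv {p : ℝ} (hp : 1 < p) : ContDiff ℝ 1 (normPowDiv p) := by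
  rw [normPowDiv_eq_inv_mul_norm_rpow]
  exact contDiff_const.mul ((contDiff_norm_rpow hp).comp Complex.equivRealProdCLM.symm.contDiff)

theorem convexOn_normPowDiv {p : ℝ} (hp : 1 ≤ p) : ConvexOn ℝ univ (normPowDiv p) := by
  rw [normPowDiv_eq_inv_mul_norm_rpow]
  simpa using ((convexOn_norm_rpow hp).comp_linearMap
    Complex.equivRealProdCLM.symm.toLinearMap).smul (inv_nonneg.2 (by linarith : (0 : ℝ) ≤ p))

theorem fderiv_normPowDiv {p : ℝ} (hp : 1 < p) (x v : ℝ × ℝ) :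
    fderiv ℝ (normPowDiv p) x v
      = (x.1 ^ 2 + x.2 ^ 2) ^ (p / 2 - 1) * (x.1 * v.1 + x.2 * v.2) := by
  have hderiv : HasFDerivAt (fun x => p⁻¹ * ‖Complex.equivRealProdCLM.symm x‖ ^ p) _ x :=
    ((hasFDerivAt_norm_rpow _ hp).comp x Complex.equivRealProdCLM.symm.hasFDerivAt).const_mul p⁻¹
  rw [normPowDiv_eq_inv_mul_norm_rpow, hderiv.fderiv]
  simp [Complex.inner, norm_equivRealProdCLM_symm_rpow, show (p - 2) / 2 = p / 2 - 1 by ring]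
  field_simp

theorem legendreEnergy_normPowDiv {p : ℝ} (hp : 1 < p) (a k : ℝ) :
    legendreEnergy (normPowDiv p) (a, k)
      = (1 / p) * (a ^ 2 + k ^ 2) ^ (p / 2 - 1) * ((p - 1) * k ^ 2 - a ^ 2) := by
  have hsplit : (a ^ 2 + k ^ 2) ^ (p / 2) = (a ^ 2 + k ^ 2) ^ (p / 2 - 1) * (a ^ 2 + k ^ 2) := by
    rw [← Real.rpow_add_one' (by positivity) (by linarith)]
    ring_nf
  rw [legendreEnergy, fderiv_normPowDiv hp, normPowDiv]
  simp only [hsplit]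
  field_simp
  ring

def painleve (p d : ℝ) (f : ℝ → ℝ) (a k : ℝ) : ℝ :=
  (1 / p) * (a ^ 2 + k ^ 2) ^ (p / 2 - 1) * ((p - 1) * k ^ 2 - a ^ 2)
    - d * |a| ^ p / p + ∫ s in (0:ℝ)..a, f s

theorem SolOn.hasDerivWithinAt_painleve {p d : ℝ} {f w w' : ℝ → ℝ} {I : Set ℝ} {τ : ℝ}
    (hp : 1 < p) (hf : Continuous f) (hw : SolOn p 1 d f w w' I) (hτ : τ ∈ I) :
    HasDerivWithinAt (fun τ => painleve p d f (w τ) (w' τ)) 0 I τ := by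
  obtain ⟨hw'c, hwd, F', hF', heq⟩ := hw
  have hexp : (p - 2) / 2 = p / 2 - 1 := by ring
  have hΦ : HasDerivWithinAt (fun τ => fderiv ℝ (normPowDiv p) (w τ, w' τ) (0, 1)) (F' τ) I τ := by
    simpa [fderiv_normPowDiv hp, hexp] using hF' τ hτ
  have henergy := hasDerivWithinAt_legendreEnergy (contDiff_normPowDiv hp)
    (convexOn_normPowDiv hp.le).comp_prodMk_left (hwd τ hτ) (hw'c τ hτ) hΦ
  have hpow := (((hasDerivAt_abs_rpow (w τ) hp).comp_hasDerivWithinAt τ (hwd τ hτ)).const_mul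
    d).div_const p
  have hprim := (hf.integral_hasStrictDerivAt 0 (w τ)).hasDerivAt.comp_hasDerivWithinAt τ (hwd τ hτ)
  have hfun : (fun τ => painleve p d f (w τ) (w' τ)) = fun τ =>
      legendreEnergy (normPowDiv p) (w τ, w' τ) - d * |w τ| ^ p / p + ∫ s in (0:ℝ)..w τ, f s := by
    ext σ
    rw [legendreEnergy_normPowDiv hp, painleve]
  rw [hfun]
  refine ((henergy.sub hpow).add hprim).congr_deriv ?_
  rw [fderiv_normPowDiv hp]
  field_simp
  linear_combination w' τ * heq τ hτ

theorem statement14 (p d : ℝ) (hp : 1 < p) (f : ℝ → ℝ) (hf : Continuous f)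
    (w w' : ℝ → ℝ) (I : Set ℝ) (hI : I.OrdConnected)
    (hw : SolOn p 1 d f w w' I) :
    ∀ τ₁ ∈ I, ∀ τ₂ ∈ I,
      (1 / p) * (w τ₁ ^ 2 + w' τ₁ ^ 2) ^ (p / 2 - 1) * ((p - 1) * w' τ₁ ^ 2 - w τ₁ ^ 2)
          - d * |w τ₁| ^ p / p + ∫ s in (0:ℝ)..(w τ₁), f s =
      (1 / p) * (w τ₂ ^ 2 + w' τ₂ ^ 2) ^ (p / 2 - 1) * ((p - 1) * w' τ₂ ^ 2 - w τ₂ ^ 2)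
          - d * |w τ₂| ^ p / p + ∫ s in (0:ℝ)..(w τ₂), f s := by
  intro τ₁ h₁ τ₂ h₂
  have hconst := (convex_iff_ordConnected.2 hI).norm_image_sub_le_of_norm_hasDerivWithin_le
    (fun τ hτ => hw.hasDerivWithinAt_painleve hp hf hτ) (fun _ _ => norm_zero.le) h₂ h₁
  rw [zero_mul, norm_le_zero_iff, sub_eq_zero] at hconst
  exact hconst
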